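/- arXiv:1710.08475 — 6 statements merged into one kernel-verified Lean document; each statement's English description precedes it below -/
import Mathlib

section
/- For a matrix P ∈ M_n, the Schur multiplication map S_P : M_n → M_n, S_P(B) = P ∘ B (entrywise product), is PPT if and only if P is positive semidefinite and diagonal. -/
open Matrix Kronecker BigOperators
open scoped ComplexOrder

noncomputable section

/-- The Choi matrix of a linear map `φ : M_p → M_q`. -/
def choi {p q : ℕ} (φ : Matrix (Fin p) (Fin p) ℂ →ₗ[ℂ] Matrix (Fin q) (Fin q) ℂ) :
    Matrix (Fin p × Fin q) (Fin p × Fin q) ℂ :=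
  fun ik jl => φ (Matrix.single ik.1 jl.1 1) ik.2 jl.2

/-- A map is completely positive iff its Choi matrix is positive semidefinite. -/
def IsCP {p q : ℕ} (φ : Matrix (Fin p) (Fin p) ℂ →ₗ[ℂ] Matrix (Fin q) (Fin q) ℂ) : Prop :=
  (choi φ).PosSemidef

/-- The transpose map on `M_n`. -/
def transposeMap (n : ℕ) : Matrix (Fin n) (Fin n) ℂ →ₗ[ℂ] Matrix (Fin n) (Fin n) ℂ where
  toFun X := Xᵀ
  map_add' X Y := Matrix.transpose_add X Y
  map_smul' c X := Matrix.transpose_smul c X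

/-- A CP map is PPT if its composition with the transpose is CP. -/
def IsPPT {p q : ℕ} (φ : Matrix (Fin p) (Fin p) ℂ →ₗ[ℂ] Matrix (Fin q) (Fin q) ℂ) : Prop :=
  IsCP φ ∧ IsCP ((transposeMap q).comp φ)

/-- Separability of a matrix on a tensor (Kronecker) product. -/
def Separable {p q : ℕ} (M : Matrix (Fin p × Fin q) (Fin p × Fin q) ℂ) : Prop :=
  ∃ (m : ℕ) (P : Fin m → Matrix (Fin p) (Fin p) ℂ) (Q : Fin m → Matrix (Fin q) (Fin q) ℂ),
    (∀ k, (P k).PosSemidef) ∧ (∀ k, (Q k).PosSemidef) ∧ M = ∑ k, P k ⊗ₖ Q k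

/-- A map is entanglement breaking iff its Choi matrix is separable. -/
def IsEB {p q : ℕ} (φ : Matrix (Fin p) (Fin p) ℂ →ₗ[ℂ] Matrix (Fin q) (Fin q) ℂ) : Prop :=
  Separable (choi φ)

/-- Schur (Hadamard) multiplication by `P` as a linear map. -/
def schurMap {n : ℕ} (P : Matrix (Fin n) (Fin n) ℂ) :
    Matrix (Fin n) (Fin n) ℂ →ₗ[ℂ] Matrix (Fin n) (Fin n) ℂ where
  toFun B := P ⊙ B
  map_add' B C := Matrix.hadamard_add P B C
  map_smul' c B := (Matrix.hadamard_smul P B c).symm ▸ rfl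

/-- The map `δ(X) = (Tr X / p) • I`. -/
def deltaMap (p : ℕ) : Matrix (Fin p) (Fin p) ℂ →ₗ[ℂ] Matrix (Fin p) (Fin p) ℂ where
  toFun X := (Matrix.trace X / p) • 1
  map_add' X Y := by simp [Matrix.trace_add, add_div, add_smul]
  map_smul' c X := by simp [mul_div_assoc, smul_smul]

/-- The one-parameter family `γ_t = t δ + S_A`. -/
def gammaMap {p : ℕ} (t : ℝ) (A : Matrix (Fin p) (Fin p) ℂ) :
    Matrix (Fin p) (Fin p) ℂ →ₗ[ℂ] Matrix (Fin p) (Fin p) ℂ :=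
  (t : ℂ) • deltaMap p + schurMap A

end

/-!
The Choi matrix of `S_P` is `P` placed on the index pairs `((i, i), (j, j))` and zero elsewhere,
so `S_P` is CP iff `P ⪰ 0`. The Choi matrix of `T ∘ S_P` has, for `i ≠ j`, zero diagonal entries at
`(i, j)` and `(j, i)` with `P i j` between them; positivity of its `2 × 2` principal minor forces
`P i j = 0`. Conversely, for diagonal `P` every `P ∘ B` is diagonal, so `T ∘ S_P = S_P`.
-/

namespace Matrix.PosSemidef

variable {ι 𝕜 : Type*} [RCLike 𝕜]

-- The principal `2 × 2` minor on `i, j` is `A i i * A j j - ‖A i j‖ ^ 2 ≥ 0`.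
theorem apply_eq_zero_of_diag_eq_zero {A : Matrix ι ι 𝕜} (hA : A.PosSemidef) {i j : ι}
    (hi : A i i = 0) (hj : A j j = 0) : A i j = 0 := by
  have hminor := (hA.submatrix ![i, j]).det_nonneg
  have hji : A j i = star (A i j) := (hA.1.apply j i).symm
  rw [det_fin_two] at hminor
  simp only [submatrix_apply, Matrix.cons_val_zero, Matrix.cons_val_one, hi, hj, hji,
    mul_zero, zero_sub, RCLike.star_def, RCLike.mul_conj, neg_nonneg] at hminor
  rw [← RCLike.ofReal_pow, RCLike.ofReal_nonpos] at hminor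
  exact norm_eq_zero.1 (by nlinarith [norm_nonneg (A i j)])

end Matrix.PosSemidef

variable {n : ℕ}

@[simp]
theorem choi_schurMap_apply (P : Matrix (Fin n) (Fin n) ℂ) (i k j l : Fin n) :
    choi (schurMap P) (i, k) (j, l) = if i = k ∧ j = l then P i j else 0 := by
  simp only [choi, schurMap, LinearMap.coe_mk, AddHom.coe_mk, hadamard_apply, single_apply]
  aesop

@[simp]
theorem choi_transposeMap_comp_schurMap_apply (P : Matrix (Fin n) (Fin n) ℂ) (i k j l : Fin n) :
    choi ((transposeMap n).comp (schurMap P)) (i, k) (j, l) =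
      if k = j ∧ l = i then P i j else 0 := by
  simp only [choi, schurMap, transposeMap, LinearMap.coe_comp, Function.comp_apply,
    LinearMap.coe_mk, AddHom.coe_mk, transpose_apply, hadamard_apply, single_apply]
  aesop

theorem isCP_schurMap_iff (P : Matrix (Fin n) (Fin n) ℂ) :
    IsCP (schurMap P) ↔ P.PosSemidef := by
  constructor
  · intro h
    have hcompress : (choi (schurMap P)).submatrix (fun i ↦ (i, i)) (fun i ↦ (i, i)) = P := by
      ext i j
      simp
    exact hcompress ▸ h.submatrix _
  · intro h
    -- `Vᴴ` is the isometry `eₐ ↦ eₐ ⊗ eₐ`.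
    let V : Matrix (Fin n) (Fin n × Fin n) ℂ :=
      of fun a ik ↦ if ik.1 = ik.2 ∧ a = ik.1 then 1 else 0
    have hfactor : choi (schurMap P) = Vᴴ * P * V := by
      ext ⟨i, k⟩ ⟨j, l⟩
      simp [V, mul_apply, ite_and, apply_ite (starRingEnd ℂ)]
      split_ifs <;> rfl
    rw [IsCP, hfactor]
    exact h.conjTranspose_mul_mul_same V

theorem transposeMap_comp_schurMap_of_isDiag {P : Matrix (Fin n) (Fin n) ℂ} (hP : P.IsDiag) :
    (transposeMap n).comp (schurMap P) = schurMap P := by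
  ext B i j
  obtain rfl | hij := eq_or_ne i j
  · rfl
  · simp [transposeMap, schurMap, hP hij, hP hij.symm]

theorem isDiag_of_isCP_transposeMap_comp_schurMap {P : Matrix (Fin n) (Fin n) ℂ}
    (hP : IsCP ((transposeMap n).comp (schurMap P))) : P.IsDiag := by
  intro i j hij
  simpa using hP.apply_eq_zero_of_diag_eq_zero (i := (i, j)) (j := (j, i))
    (by simp [hij.symm]) (by simp [hij])

/-- the Schur multiplication map `S_P` is PPT iff `P` is
positive semidefinite and diagonal. -/
theorem schurMap_isPPT_iff {n : ℕ} (P : Matrix (Fin n) (Fin n) ℂ) :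
    IsPPT (schurMap P) ↔ P.PosSemidef ∧ P.IsDiag := by
  constructor
  · rintro ⟨hCP, hTCP⟩
    exact ⟨(isCP_schurMap_iff P).1 hCP, isDiag_of_isCP_transposeMap_comp_schurMap hTCP⟩
  · rintro ⟨hPSD, hdiag⟩
    rw [IsPPT, transposeMap_comp_schurMap_of_isDiag hdiag, and_self]
    exact (isCP_schurMap_iff P).2 hPSD
end

section
/- Let φ : M_n → M_n be an idempotent unital completely positive map whose range, equipped with the Choi–Effros product a ∗ b = φ(ab), contains a direct summand *-isomorphic to M_k for some k ≥ 2. Then φ is not PPT. -/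
/-!
Write `Ψ = id_k ⊗ φ` and `P = id_k ⊗ π`. Pick `b i j ∈ ran φ` with `π (b i j) = E_ij` and let
`B = (b i j)`. If `T ∘ φ` is completely positive, the partial transpose of `BᴴB` is mapped by
`Ψ` to a positive matrix `V`, and `P V = k • F` with `F` the flip of `ℂᵏ ⊗ ℂᵏ`, which has the
eigenvalue `-k` on antisymmetric vectors. On the other hand `P` is a unital homomorphism of the
Choi–Effros algebra of `Ψ`, and such maps send positive elements to matrices without negative
eigenvalues: for `μ < 0`, `V - μ` is invertible in the Choi–Effros algebra, since `Ψ (V y) = μ y`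
with `y ∈ ran Ψ` forces `tr (yᴴ y) ≤ 0`, i.e. `y = 0`, by the Kadison–Schwarz inequality and
the Choi–Effros bimodule property.
-/

open Matrix Kronecker BigOperators
open scoped ComplexOrder

open scoped MatrixOrder

theorem Complex.eq_zero_of_forall_quadratic_nonneg {p s : ℂ} (hs : 0 ≤ s)
    (h : ∀ t : ℂ, 0 ≤ t * p + star t * star p + t * star t * s) : p = 0 := by
  obtain ⟨σ, rfl⟩ : ∃ σ : ℝ, s = σ := ⟨s.re, Complex.eq_re_of_ofReal_le hs⟩
  have hσ : 0 ≤ σ := Complex.zero_le_real.1 hs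
  set ε : ℝ := 1 / (σ + 1)
  have hε : 0 < ε := by positivity
  have hεσ : ε * σ < 1 := by
    rw [div_mul_eq_mul_div, one_mul, div_lt_one (by linarith)]
    linarith
  have key := h (-(ε : ℂ) * star p)
  have hval : -(ε : ℂ) * star p * p + star (-(ε : ℂ) * star p) * star p
      + -(ε : ℂ) * star p * star (-(ε : ℂ) * star p) * σ
      = ((ε * Complex.normSq p * (ε * σ - 2) : ℝ) : ℂ) := by
    simp only [star_mul', star_neg, Complex.star_def, Complex.conj_ofReal, Complex.conj_conj]
    push_cast
    rw [Complex.normSq_eq_conj_mul_self]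
    ring
  rw [hval, Complex.zero_le_real] at key
  by_contra hp
  have hneg : ε * Complex.normSq p * (ε * σ - 2) < 0 :=
    mul_neg_of_pos_of_neg (mul_pos hε (Complex.normSq_pos.2 hp)) (by linarith)
  linarith

theorem Matrix.eq_zero_of_forall_dotProduct_mulVec_eq_zero {β : Type*} [Fintype β]
    [DecidableEq β] {R : Matrix β β ℂ} (h : ∀ w, star w ⬝ᵥ R *ᵥ w = 0) : R = 0 := by
  have : toLpLin 2 2 R = 0 := (inner_map_self_eq_zero _).1 fun x => by
    rw [EuclideanSpace.inner_eq_star_dotProduct, toLpLin_apply, dotProduct_comm, star_dotProduct]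
    simp [h]
  simpa using this

namespace LinearMap

section Choi

variable {α β : Type*} [DecidableEq α]

/-- Agrees with `choi` on `Fin` indices, so `IsCP ψ` unfolds to
`ψ.choiMatrix.PosSemidef`. -/
def choiMatrix (ψ : Matrix α α ℂ →ₗ[ℂ] Matrix β β ℂ) : Matrix (α × β) (α × β) ℂ :=
  fun ab cd => ψ (Matrix.single ab.1 cd.1 1) ab.2 cd.2

variable [Fintype α]

theorem apply_apply_eq_sum_choiMatrix (ψ : Matrix α α ℂ →ₗ[ℂ] Matrix β β ℂ)
    (X : Matrix α α ℂ) (b d : β) :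
    ψ X b d = ∑ a, ∑ c, X a c * ψ.choiMatrix (a, b) (c, d) := by
  conv_lhs => rw [matrix_eq_sum_single X]
  simp only [map_sum, Matrix.sum_apply, choiMatrix]
  refine Finset.sum_congr rfl fun a _ => Finset.sum_congr rfl fun c _ => ?_
  rw [← smul_eq_mul, ← Matrix.smul_apply, ← map_smul, smul_single, smul_eq_mul, mul_one]

theorem map_conjTranspose_of_isHermitian {ψ : Matrix α α ℂ →ₗ[ℂ] Matrix β β ℂ}
    (h : ψ.choiMatrix.IsHermitian) (X : Matrix α α ℂ) : ψ Xᴴ = (ψ X)ᴴ := by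
  ext b d
  simp only [conjTranspose_apply, apply_apply_eq_sum_choiMatrix, star_sum, star_mul']
  rw [Finset.sum_comm]
  refine Finset.sum_congr rfl fun c _ => Finset.sum_congr rfl fun a _ => ?_
  rw [← h.apply (c, d) (a, b), star_star]

end Choi

section Ampliation

variable {α β γ : Type*}

/-- `id_γ ⊗ ψ`, applying `ψ` to every block of a `γ × γ` block matrix. -/
def ampliation (γ : Type*) (ψ : Matrix α α ℂ →ₗ[ℂ] Matrix β β ℂ) :
    Matrix (γ × α) (γ × α) ℂ →ₗ[ℂ] Matrix (γ × β) (γ × β) ℂ :=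
  (compLinearEquiv γ γ β β ℂ ℂ).toLinearMap ∘ₗ ψ.mapMatrix ∘ₗ
    (compLinearEquiv γ γ α α ℂ ℂ).symm.toLinearMap

theorem ampliation_apply (ψ : Matrix α α ℂ →ₗ[ℂ] Matrix β β ℂ) (X : Matrix (γ × α) (γ × α) ℂ)
    (i j : γ) (b d : β) :
    ψ.ampliation γ X (i, b) (j, d) = ψ ((Matrix.comp γ γ α α ℂ).symm X i j) b d := rfl

theorem comp_symm_ampliation (ψ : Matrix α α ℂ →ₗ[ℂ] Matrix β β ℂ)
    (X : Matrix (γ × α) (γ × α) ℂ) :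
    (Matrix.comp γ γ β β ℂ).symm (ψ.ampliation γ X) = ((Matrix.comp γ γ α α ℂ).symm X).map ψ :=
  rfl

theorem ampliation_comp {δ : Type*} (ψ : Matrix β β ℂ →ₗ[ℂ] Matrix δ δ ℂ)
    (χ : Matrix α α ℂ →ₗ[ℂ] Matrix β β ℂ) :
    (ψ ∘ₗ χ).ampliation γ = ψ.ampliation γ ∘ₗ χ.ampliation γ := rfl

theorem ampliation_one [DecidableEq α] [DecidableEq β] [DecidableEq γ]
    {ψ : Matrix α α ℂ →ₗ[ℂ] Matrix β β ℂ} (hψ : ψ 1 = 1) : ψ.ampliation γ 1 = 1 := by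
  have h1 : (Matrix.comp γ γ α α ℂ).symm 1 = 1 := (Equiv.symm_apply_eq _).2 comp_one.symm
  ext ⟨i, b⟩ ⟨j, d⟩
  rw [ampliation_apply, h1]
  by_cases h : i = j <;> simp [h, one_apply, hψ]

theorem ampliation_map_mul_of_mem_range [Fintype α] [Fintype γ] {δ : Type*} [Fintype δ]
    {ψ : Matrix α α ℂ →ₗ[ℂ] Matrix α α ℂ} {π : Matrix α α ℂ →ₗ[ℂ] Matrix δ δ ℂ}
    (hmul : ∀ a ∈ Set.range ψ, ∀ b ∈ Set.range ψ, π (ψ (a * b)) = π a * π b)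
    {X Y : Matrix (γ × α) (γ × α) ℂ} (hX : X ∈ Set.range (ψ.ampliation γ))
    (hY : Y ∈ Set.range (ψ.ampliation γ)) :
    π.ampliation γ (ψ.ampliation γ (X * Y)) = π.ampliation γ X * π.ampliation γ Y := by
  obtain ⟨X, rfl⟩ := hX
  obtain ⟨Y, rfl⟩ := hY
  apply (Matrix.comp γ γ δ δ ℂ).symm.injective
  ext1 i j
  simp only [comp_symm_ampliation, map_apply]
  rw [← compRingEquiv_symm_apply, map_mul, mul_apply, ← compRingEquiv_symm_apply, map_mul,
    mul_apply, map_sum, map_sum]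
  simp only [compRingEquiv_symm_apply, comp_symm_ampliation, map_apply]
  exact Finset.sum_congr rfl fun l _ => hmul _ ⟨_, rfl⟩ _ ⟨_, rfl⟩

theorem ampliation_conjTranspose_mul_self [Fintype α] [DecidableEq α] [Fintype β]
    [DecidableEq β] [Fintype γ] (ψ : Matrix α α ℂ →ₗ[ℂ] Matrix β β ℂ)
    (C : Matrix (γ × α) (γ × α) ℂ) :
    ψ.ampliation γ (Cᴴ * C) =
      ∑ l, (of (fun a j => C l (j, a)) ⊗ₖ (1 : Matrix β β ℂ))ᴴ * ψ.choiMatrix *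
        (of (fun a j => C l (j, a)) ⊗ₖ (1 : Matrix β β ℂ)) := by
  ext ⟨i, b⟩ ⟨j, d⟩
  simp only [ampliation_apply, apply_apply_eq_sum_choiMatrix, Matrix.sum_apply, mul_apply,
    conjTranspose_apply, kroneckerMap_apply, one_apply, of_apply, comp_symm_apply]
  simp only [Fintype.sum_prod_type (α₁ := α) (α₂ := β), apply_ite star, star_zero, mul_ite,
    mul_one, mul_zero, ite_mul, zero_mul, Finset.sum_ite_eq', Finset.mem_univ, if_true,
    Finset.sum_mul]
  rw [Finset.sum_comm, Finset.sum_congr rfl fun c _ => Finset.sum_comm, Finset.sum_comm]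
  exact Finset.sum_congr rfl fun l _ => Finset.sum_congr rfl fun c _ =>
    Finset.sum_congr rfl fun a _ => by ring

theorem posSemidef_ampliation [Fintype α] [DecidableEq α] [Fintype β] [DecidableEq β]
    [Fintype γ] [DecidableEq γ] {ψ : Matrix α α ℂ →ₗ[ℂ] Matrix β β ℂ}
    (hψ : ψ.choiMatrix.PosSemidef) {M : Matrix (γ × α) (γ × α) ℂ} (hM : M.PosSemidef) :
    (ψ.ampliation γ M).PosSemidef := by
  obtain ⟨C, rfl⟩ := CStarAlgebra.nonneg_iff_eq_star_mul_self.mp hM.nonneg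
  rw [star_eq_conjTranspose, ampliation_conjTranspose_mul_self]
  exact posSemidef_sum _ fun l _ => hψ.conjTranspose_mul_mul_same _

-- `vecMulVec e (star e)` with `e = δ_{ii'}` is the unnormalised maximally entangled projection.
theorem choiMatrix_ampliation [DecidableEq α] [DecidableEq γ]
    (ψ : Matrix α α ℂ →ₗ[ℂ] Matrix β β ℂ) :
    (ψ.ampliation γ).choiMatrix =
      (vecMulVec (fun ii : γ × γ => if ii.1 = ii.2 then (1 : ℂ) else 0)
          (star fun ii : γ × γ => if ii.1 = ii.2 then (1 : ℂ) else 0) ⊗ₖ ψ.choiMatrix).submatrix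
        (Equiv.prodProdProdComm γ α γ β) (Equiv.prodProdProdComm γ α γ β) := by
  ext ⟨⟨i, a⟩, ⟨i', b⟩⟩ ⟨⟨j, c⟩, ⟨j', d⟩⟩
  simp only [choiMatrix, ampliation_apply, comp_symm_single, submatrix_apply,
    kroneckerMap_apply, vecMulVec_apply, Equiv.prodProdProdComm_apply, Pi.star_apply]
  rw [Matrix.single_apply]
  by_cases hi : i = i' <;> by_cases hj : j = j' <;> simp [hi, hj]

theorem posSemidef_choiMatrix_ampliation [Fintype α] [DecidableEq α] [Fintype β]
    [Fintype γ] [DecidableEq γ] {ψ : Matrix α α ℂ →ₗ[ℂ] Matrix β β ℂ}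
    (hψ : ψ.choiMatrix.PosSemidef) :
    (ψ.ampliation γ).choiMatrix.PosSemidef := by
  rw [choiMatrix_ampliation]
  exact ((posSemidef_vecMulVec_self_star _).kronecker hψ).submatrix _

end Ampliation

section Positivity

variable {α β : Type*} [Fintype α] [DecidableEq α] [Fintype β] [DecidableEq β]
  {ψ : Matrix α α ℂ →ₗ[ℂ] Matrix β β ℂ}

theorem posSemidef_map (hψ : ψ.choiMatrix.PosSemidef) {M : Matrix α α ℂ} (hM : M.PosSemidef) :
    (ψ M).PosSemidef :=
  (posSemidef_ampliation (γ := Unit) hψ (hM.submatrix Prod.snd)).submatrix (Prod.mk ())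

/-- Kadison–Schwarz: the Schur complement of the positive block matrix
`(id₂ ⊗ ψ) [[1, x], [xᴴ, xᴴ x]]`. -/
theorem conjTranspose_map_mul_map_le (hψ : ψ.choiMatrix.PosSemidef) (hψ₁ : ψ 1 = 1)
    (x : Matrix α α ℂ) : (ψ x)ᴴ * ψ x ≤ ψ (xᴴ * x) := by
  let e := Equiv.boolProdEquivSum α
  let e' := Equiv.boolProdEquivSum β
  have hM : (fromBlocks 1 x xᴴ (xᴴ * x)).PosSemidef := by
    have : fromBlocks 1 x xᴴ (xᴴ * x) = (fromBlocks 1 x 0 0)ᴴ * fromBlocks 1 x 0 0 := by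
      simp [fromBlocks_conjTranspose, fromBlocks_multiply]
    rw [this]
    exact posSemidef_conjTranspose_mul_self _
  have hblocks :
      (ψ.ampliation Bool ((fromBlocks 1 x xᴴ (xᴴ * x)).submatrix e e)).submatrix e'.symm e'.symm
        = fromBlocks (ψ 1) (ψ x) (ψ xᴴ) (ψ (xᴴ * x)) := by
    ext (a | a) (b | b) <;> rfl
  rw [hψ₁, map_conjTranspose_of_isHermitian hψ.isHermitian] at hblocks
  have hN := hblocks ▸ (posSemidef_ampliation hψ (hM.submatrix e)).submatrix e'.symm
  let _ : Invertible (1 : Matrix β β ℂ) := invertibleOne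
  simpa [le_iff] using (PosDef.fromBlocks₁₁ (ψ x) (ψ (xᴴ * x)) PosDef.one).mp hN

end Positivity

section ChoiEffros

variable {α : Type*} [Fintype α] [DecidableEq α] {ψ : Matrix α α ℂ →ₗ[ℂ] Matrix α α ℂ}

theorem map_conjTranspose_mul_eq_zero (hψ : ψ.choiMatrix.PosSemidef) (hψ₁ : ψ 1 = 1)
    (hidem : ∀ X, ψ (ψ X) = ψ X) {a c : Matrix α α ℂ} (ha : ψ a = a) (hc : ψ c = 0) :
    ψ (aᴴ * c) = 0 := by
  set R := ψ (aᴴ * c)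
  have hS : (ψ (cᴴ * c)).PosSemidef := posSemidef_map hψ (posSemidef_conjTranspose_mul_self c)
  have hpos (t : ℂ) : (t • R + star t • Rᴴ + (t * star t) • ψ (cᴴ * c)).PosSemidef := by
    have h := posSemidef_map hψ (le_iff.1 (conjTranspose_map_mul_map_le hψ hψ₁ (a + t • c)))
    have hx : ψ (a + t • c) = a := by rw [map_add, map_smul, ha, hc, smul_zero, add_zero]
    have hR : Rᴴ = ψ (cᴴ * a) := by
      rw [← map_conjTranspose_of_isHermitian hψ.isHermitian, conjTranspose_mul,
        conjTranspose_conjTranspose]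
    have hexp : (a + t • c)ᴴ * (a + t • c) =
        aᴴ * a + t • (aᴴ * c) + star t • (cᴴ * a) + (t * star t) • (cᴴ * c) := by
      rw [conjTranspose_add, conjTranspose_smul, add_mul, mul_add, mul_add, Matrix.smul_mul,
        Matrix.mul_smul, Matrix.smul_mul, Matrix.mul_smul, smul_smul, mul_comm (star t)]
      abel
    rw [hR]
    rwa [hx, map_sub, hidem, hexp, map_add, map_add, map_add, map_smul, map_smul, map_smul,
      add_assoc, add_assoc, add_sub_cancel_left, ← add_assoc] at h
  refine eq_zero_of_forall_dotProduct_mulVec_eq_zero fun w =>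
    Complex.eq_zero_of_forall_quadratic_nonneg (hS.dotProduct_mulVec_nonneg w) fun t => ?_
  have hR : star w ⬝ᵥ Rᴴ *ᵥ w = star (star w ⬝ᵥ R *ᵥ w) := by
    rw [star_dotProduct, star_mulVec, conjTranspose_conjTranspose, dotProduct_mulVec]
  have h := (hpos t).dotProduct_mulVec_nonneg w
  rwa [add_mulVec, add_mulVec, smul_mulVec, smul_mulVec, smul_mulVec, dotProduct_add,
    dotProduct_add, dotProduct_smul, dotProduct_smul, dotProduct_smul, hR] at h

theorem map_mul_map (hψ : ψ.choiMatrix.PosSemidef) (hψ₁ : ψ 1 = 1) (hidem : ∀ X, ψ (ψ X) = ψ X)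
    {a : Matrix α α ℂ} (ha : ψ a = a) (x : Matrix α α ℂ) : ψ (a * ψ x) = ψ (a * x) := by
  have ha' : ψ aᴴ = aᴴ := by rw [map_conjTranspose_of_isHermitian hψ.isHermitian, ha]
  have h := map_conjTranspose_mul_eq_zero hψ hψ₁ hidem ha' (c := x - ψ x)
    (by rw [map_sub, hidem, sub_self])
  rwa [conjTranspose_conjTranspose, mul_sub, map_sub, sub_eq_zero, eq_comm] at h

theorem eq_zero_of_map_mul_eq_smul (hψ : ψ.choiMatrix.PosSemidef) (hψ₁ : ψ 1 = 1)
    (hidem : ∀ X, ψ (ψ X) = ψ X) {V y : Matrix α α ℂ} (hV : V.PosSemidef) (hy : ψ y = y)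
    {μ : ℝ} (hμ : μ < 0) (hVy : ψ (V * y) = (μ : ℂ) • y) : y = 0 := by
  have hy' : ψ yᴴ = yᴴ := by rw [map_conjTranspose_of_isHermitian hψ.isHermitian, hy]
  have hmod : ψ (yᴴ * (V * y)) = (μ : ℂ) • ψ (yᴴ * y) := by
    rw [← map_mul_map hψ hψ₁ hidem hy', hVy, mul_smul_comm, map_smul]
  have hVtr : 0 ≤ (μ : ℂ) * (ψ (yᴴ * y)).trace := by
    rw [← smul_eq_mul, ← trace_smul, ← hmod, ← mul_assoc]
    exact (posSemidef_map hψ (hV.conjTranspose_mul_mul_same y)).trace_nonneg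
  have hschwarz : (yᴴ * y).trace ≤ (ψ (yᴴ * y)).trace := by
    have h := (le_iff.1 (conjTranspose_map_mul_map_le hψ hψ₁ y)).trace_nonneg
    rwa [hy, trace_sub, sub_nonneg] at h
  have hneg : 0 < -(μ : ℂ) := by exact_mod_cast neg_pos.2 hμ
  have htr : -(μ : ℂ) * (yᴴ * y).trace = 0 := by
    refine le_antisymm ?_ (mul_nonneg hneg.le (posSemidef_conjTranspose_mul_self y).trace_nonneg)
    calc -(μ : ℂ) * (yᴴ * y).trace ≤ -(μ : ℂ) * (ψ (yᴴ * y)).trace :=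
          mul_le_mul_of_nonneg_left hschwarz hneg.le
      _ = -((μ : ℂ) * (ψ (yᴴ * y)).trace) := neg_mul _ _
      _ ≤ 0 := neg_nonpos.2 hVtr
  exact trace_conjTranspose_mul_self_eq_zero_iff.1 ((mul_eq_zero.1 htr).resolve_left hneg.ne')

/-- `V - μ` is invertible in the Choi–Effros algebra `(range ψ, fun a b => ψ (a * b))`. -/
theorem exists_map_mul_eq_one (hψ : ψ.choiMatrix.PosSemidef) (hψ₁ : ψ 1 = 1)
    (hidem : ∀ X, ψ (ψ X) = ψ X) {V : Matrix α α ℂ} (hV : V.PosSemidef) {μ : ℝ} (hμ : μ < 0) :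
    ∃ y, ψ y = y ∧ ψ ((V - (μ : ℂ) • 1) * y) = 1 := by
  let L : range ψ →ₗ[ℂ] range ψ :=
    (ψ ∘ₗ mulLeft ℂ (V - (μ : ℂ) • 1)).restrict fun _ _ => mem_range_self _ _
  have hL : Function.Injective L := by
    rw [← ker_eq_bot, ker_eq_bot']
    rintro ⟨_, x, rfl⟩ h
    have h' : ψ ((V - (μ : ℂ) • 1) * ψ x) = 0 := congrArg Subtype.val h
    rw [sub_mul, smul_mul, one_mul, map_sub, map_smul, hidem, sub_eq_zero] at h'
    exact Subtype.ext (eq_zero_of_map_mul_eq_smul hψ hψ₁ hidem hV (hidem x) hμ h')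
  obtain ⟨⟨y, x, rfl⟩, hy⟩ := injective_iff_surjective.1 hL ⟨1, 1, hψ₁⟩
  exact ⟨ψ x, hidem x, congrArg Subtype.val hy⟩

/-- A unital homomorphism `P` of the Choi–Effros algebra of `ψ` maps positive elements to
matrices with no negative eigenvalue. -/
theorem eq_zero_of_mulVec_eq_smul {κ : Type*} [Fintype κ] [DecidableEq κ]
    (hψ : ψ.choiMatrix.PosSemidef) (hψ₁ : ψ 1 = 1) (hidem : ∀ X, ψ (ψ X) = ψ X)
    {P : Matrix α α ℂ →ₗ[ℂ] Matrix κ κ ℂ} (hP₁ : P 1 = 1)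
    (hPmul : ∀ a ∈ Set.range ψ, ∀ b ∈ Set.range ψ, P (ψ (a * b)) = P a * P b)
    {V : Matrix α α ℂ} (hV : V.PosSemidef) (hVψ : ψ V = V) {μ : ℝ} (hμ : μ < 0) {w : κ → ℂ}
    (hw : P V *ᵥ w = (μ : ℂ) • w) : w = 0 := by
  obtain ⟨y, hy, hVy⟩ := exists_map_mul_eq_one hψ hψ₁ hidem hV hμ
  have hZ : V - (μ : ℂ) • 1 ∈ Set.range ψ :=
    ⟨V - (μ : ℂ) • 1, by rw [map_sub, map_smul, hVψ, hψ₁]⟩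
  have hinv : (P V - (μ : ℂ) • 1) * P y = 1 := by
    rw [← hP₁, ← map_smul, ← map_sub, ← hPmul _ hZ _ ⟨y, hy⟩, hVy]
  have hw' : (P V - (μ : ℂ) • 1) *ᵥ w = 0 := by
    rw [sub_mulVec, hw, smul_mulVec, one_mulVec, sub_self]
  rw [← one_mulVec w, ← mul_eq_one_comm.1 hinv, ← mulVec_mulVec, hw', mulVec_zero]

end ChoiEffros

end LinearMap

namespace Matrix

variable {α κ : Type*}

/-- Transpose in the first tensor factor: the block matrix `(X i j)` becomes `(X j i)`. -/
def partialTranspose {R : Type*} (X : Matrix (κ × α) (κ × α) R) : Matrix (κ × α) (κ × α) R :=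
  fun p q => X (q.1, p.2) (p.1, q.2)

theorem transpose_ampliation_transposeMap {n : ℕ}
    (ψ : Matrix α α ℂ →ₗ[ℂ] Matrix (Fin n) (Fin n) ℂ) (X : Matrix (κ × α) (κ × α) ℂ) :
    ((transposeMap n ∘ₗ ψ).ampliation κ X)ᵀ = ψ.ampliation κ X.partialTranspose := rfl

theorem exists_ne_zero_comp_prodComm_eq_neg [Nontrivial κ] :
    ∃ v : κ × κ → ℂ, v ≠ 0 ∧ v ∘ Equiv.prodComm κ κ = -v := by
  classical
  obtain ⟨i, j, hij⟩ := exists_pair_ne κ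
  refine ⟨Pi.single (i, j) 1 - Pi.single (j, i) 1, fun h => ?_, ?_⟩
  · simpa [Pi.single_apply, hij] using congrFun h (i, j)
  · ext ⟨a, b⟩
    simp [Pi.single_apply, and_comm]

variable [Fintype κ] [DecidableEq κ] [Fintype α] [DecidableEq α]

theorem ampliation_ampliation_partialTranspose_eq {φ : Matrix α α ℂ →ₗ[ℂ] Matrix α α ℂ}
    {π : Matrix α α ℂ →ₗ[ℂ] Matrix κ κ ℂ} (hφ : φ.choiMatrix.IsHermitian)
    (hmul : ∀ a ∈ Set.range φ, ∀ b ∈ Set.range φ, π (φ (a * b)) = π a * π b)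
    (hstar : ∀ a ∈ Set.range φ, π aᴴ = (π a)ᴴ) {b : Matrix κ κ (Matrix α α ℂ)}
    (hb : ∀ i j, b i j ∈ Set.range φ) (hπb : ∀ i j, π (b i j) = single i j 1) :
    π.ampliation κ (φ.ampliation κ ((comp κ κ α α ℂ b)ᴴ * comp κ κ α α ℂ b).partialTranspose) =
      (Fintype.card κ : ℂ) • Equiv.Perm.permMatrix ℂ (Equiv.prodComm κ κ) := by
  have hblk (i j : κ) : (comp κ κ α α ℂ).symm
      ((comp κ κ α α ℂ b)ᴴ * comp κ κ α α ℂ b).partialTranspose i j = ∑ l, (b l j)ᴴ * b l i := by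
    ext a c
    simp [partialTranspose, mul_apply, Fintype.sum_prod_type, sum_apply]
  have hterm (i j l : κ) : π (φ ((b l j)ᴴ * b l i)) = single j i 1 := by
    obtain ⟨z, hz⟩ := hb l j
    have hmem : (b l j)ᴴ ∈ Set.range φ :=
      ⟨zᴴ, by rw [LinearMap.map_conjTranspose_of_isHermitian hφ, hz]⟩
    rw [hmul _ hmem _ (hb l i), hstar _ (hb l j), hπb, hπb, conjTranspose_single, star_one,
      single_mul_single_same, mul_one]
  ext ⟨i, x⟩ ⟨j, y⟩
  rw [LinearMap.ampliation_apply, LinearMap.comp_symm_ampliation, map_apply, hblk, map_sum,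
    map_sum]
  simp [hterm, single_apply, PEquiv.toMatrix_apply, Equiv.toPEquiv_apply, and_comm, eq_comm]

end Matrix

/-- A direct summand of `(ran φ, ∗)` *-isomorphic to `M_k` is encoded by a surjective
*-homomorphism `π` from `(ran φ, ∗)` onto `M_k`. -/
theorem not_ppt_of_matrix_summand {n k : ℕ} (hk : 2 ≤ k)
    (φ : Matrix (Fin n) (Fin n) ℂ →ₗ[ℂ] Matrix (Fin n) (Fin n) ℂ)
    (hidem : φ.comp φ = φ) (hunital : φ 1 = 1) (hcp : IsCP φ)
    (π : Matrix (Fin n) (Fin n) ℂ →ₗ[ℂ] Matrix (Fin k) (Fin k) ℂ)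
    (hsurj : ∀ Y : Matrix (Fin k) (Fin k) ℂ, ∃ X, π (φ X) = Y)
    (hmul : ∀ a ∈ Set.range φ, ∀ b ∈ Set.range φ, π (φ (a * b)) = π a * π b)
    (hstar : ∀ a ∈ Set.range φ, π aᴴ = (π a)ᴴ) :
    ¬ IsPPT φ := by
  rintro ⟨-, hppt⟩
  have hφ : φ.choiMatrix.PosSemidef := hcp
  have hΨ (X) : φ.ampliation (Fin k) (φ.ampliation (Fin k) X) = φ.ampliation (Fin k) X := by
    rw [← LinearMap.comp_apply, ← LinearMap.ampliation_comp, hidem]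
  have hπ₁ : π 1 = 1 := by
    obtain ⟨X, hX⟩ := hsurj 1
    simpa [hX, ← LinearMap.comp_apply, hidem] using (hmul 1 ⟨1, hunital⟩ (φ X) ⟨X, rfl⟩).symm
  choose pre hpre using hsurj
  let b : Matrix (Fin k) (Fin k) (Matrix (Fin n) (Fin n) ℂ) := fun i j => φ (pre (single i j 1))
  have hV := (LinearMap.posSemidef_ampliation hppt
    (posSemidef_conjTranspose_mul_self (comp _ _ _ _ ℂ b))).transpose
  rw [transpose_ampliation_transposeMap] at hV
  have hπV := ampliation_ampliation_partialTranspose_eq hφ.isHermitian hmul hstar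
    (fun i j => ⟨_, rfl⟩) (fun i j => hpre (single i j 1))
  have : Nontrivial (Fin k) := Fin.nontrivial_iff_two_le.2 hk
  obtain ⟨v, hv0, hv⟩ := exists_ne_zero_comp_prodComm_eq_neg (κ := Fin k)
  refine hv0 (LinearMap.eq_zero_of_mulVec_eq_smul (LinearMap.posSemidef_choiMatrix_ampliation hφ)
    (LinearMap.ampliation_one hunital) hΨ (LinearMap.ampliation_one hπ₁)
    (fun _ ha _ hb => LinearMap.ampliation_map_mul_of_mem_range hmul ha hb) hV (hΨ _)
    (μ := -k) (by simp; omega) ?_)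
  rw [hπV, smul_mulVec, permMatrix_mulVec, hv]
  simp
end

section
/- Let S be a compact abelian topological semigroup. Then S contains an idempotent element; more precisely, the intersection K = ∩_{a ∈ S} aS is a nonempty minimal ideal of S and possesses a multiplicative identity, which is an idempotent of S. -/
open Matrix Kronecker BigOperators
open scoped ComplexOrder

/-!
The sets `aS` are compact and, by commutativity, downward directed (`abS ⊆ aS ∩ bS`), so their
intersection `K` is nonempty. Every nonempty ideal `I` contains `K`: for `b ∈ I`, each `x ∈ K`
lies in `bS ⊆ I`. Finally, for `k ∈ K` write `k = k²v`; then `e = kv ∈ K` is an identity on `K`,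
because every element of `K` has the form `ky` and `e(ky) = (k²v)y = ky`.
-/

namespace CommSemigroup

variable {S : Type*} [CommSemigroup S]

theorem directed_range_mul : Directed (· ⊇ ·) fun a : S => Set.range (a * ·) := by
  intro a b
  refine ⟨a * b, ?_, ?_⟩
  · rintro _ ⟨x, rfl⟩
    exact ⟨b * x, (mul_assoc a b x).symm⟩
  · rintro _ ⟨x, rfl⟩
    exact ⟨a * x, (mul_left_comm b a x).trans (mul_assoc a b x).symm⟩

theorem mul_mem_iInter_range_mul (s : S) {x : S} (hx : x ∈ ⋂ a : S, Set.range (a * ·)) :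
    s * x ∈ ⋂ a : S, Set.range (a * ·) := by
  refine Set.mem_iInter.2 fun a => ?_
  obtain ⟨y, rfl⟩ := Set.mem_iInter.1 hx a
  exact ⟨s * y, mul_left_comm a s y⟩

theorem iInter_range_mul_subset_of_isIdeal {I : Set S} (hI : I.Nonempty)
    (hIideal : ∀ s : S, ∀ x ∈ I, s * x ∈ I) : (⋂ a : S, Set.range (a * ·)) ⊆ I := by
  obtain ⟨b, hb⟩ := hI
  intro x hx
  obtain ⟨y, rfl⟩ := Set.mem_iInter.1 hx b
  simpa only [mul_comm y b] using hIideal y b hb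

theorem exists_mul_eq_self_of_mem_iInter_range_mul {k : S}
    (hk : k ∈ ⋂ a : S, Set.range (a * ·)) :
    ∃ e ∈ ⋂ a : S, Set.range (a * ·), ∀ x ∈ ⋂ a : S, Set.range (a * ·), e * x = x := by
  obtain ⟨v, hv : k * k * v = k⟩ := Set.mem_iInter.1 hk (k * k)
  refine ⟨v * k, mul_mem_iInter_range_mul v hk, fun x hx => ?_⟩
  obtain ⟨y, rfl⟩ := Set.mem_iInter.1 hx k
  calc v * k * (k * y) = k * k * v * y := by ac_rfl
    _ = k * y := by rw [hv]

theorem nonempty_iInter_range_mul [TopologicalSpace S] [CompactSpace S] [T2Space S]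
    [Nonempty S] (hcont : ∀ a : S, Continuous (a * ·)) :
    (⋂ a : S, Set.range (a * ·)).Nonempty :=
  have hcompact : ∀ a : S, IsCompact (Set.range (a * ·)) := fun a => isCompact_range (hcont a)
  IsCompact.nonempty_iInter_of_directed_nonempty_isCompact_isClosed _ directed_range_mul
    (fun _ => Set.range_nonempty _) hcompact fun a => (hcompact a).isClosed

end CommSemigroup

/-- a compact abelian topological semigroup contains an idempotent;
more precisely, `K = ⋂_{a ∈ S} aS` is a nonempty minimal ideal possessing a
multiplicative identity, which is an idempotent of `S`. -/
theorem compact_abelian_semigroup_idempotent {S : Type*} [CommSemigroup S]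
    [TopologicalSpace S] [CompactSpace S] [T2Space S] [ContinuousMul S] [Nonempty S]
    (K : Set S) (hK : K = ⋂ a : S, Set.range (fun x => a * x)) :
    K.Nonempty ∧
    (∀ s : S, ∀ x ∈ K, s * x ∈ K) ∧
    (∀ I : Set S, I.Nonempty → (∀ s : S, ∀ x ∈ I, s * x ∈ I) → I ⊆ K → I = K) ∧
    ∃ e ∈ K, (∀ x ∈ K, e * x = x) ∧ e * e = e := by
  subst hK
  obtain ⟨k, hk⟩ := CommSemigroup.nonempty_iInter_range_mul (S := S) continuous_const_mul
  obtain ⟨e, he, he_id⟩ := CommSemigroup.exists_mul_eq_self_of_mem_iInter_range_mul hk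
  exact ⟨⟨k, hk⟩, fun s _ hx => CommSemigroup.mul_mem_iInter_range_mul s hx,
    fun I hI hIideal hIK => hIK.antisymm
      (CommSemigroup.iInter_range_mul_subset_of_isIdeal hI hIideal),
    e, he, he_id, he_id e he⟩
end

section
/- If φ is a contractive linear map on a finite-dimensional normed space, then some limit point of the sequence (φ^k)_{k≥1} of its iterates is an idempotent map. -/
open Matrix Kronecker BigOperators
open scoped ComplexOrder

/-! The cluster points of the powers of `a` in a Hausdorff monoid with separately continuous
multiplication form a closed subsemigroup, compact and nonempty as soon as the powers eventually
stay in a compact set; the Ellis–Nakamura lemma then yields an idempotent among them. For a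
contraction of a finite-dimensional space, that compact set is the closed unit ball of
`E →L[ℂ] E`. -/

open Filter

section PowClusterPts

variable {M : Type*} [Monoid M] [TopologicalSpace M]

def powClusterPts (a : M) : Set M :=
  {x | MapClusterPt x atTop (a ^ · : ℕ → M)}

theorem isClosed_powClusterPts (a : M) : IsClosed (powClusterPts a) :=
  isClosed_setOfPred_clusterPt

theorem powClusterPts_subset_of_eventually_mem {a : M} {K : Set M} (hK : IsClosed K)
    (h : ∀ᶠ n in atTop, a ^ n ∈ K) : powClusterPts a ⊆ K :=
  fun _ hx => hK.mem_of_mapClusterPt hx h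

theorem powClusterPts_nonempty_of_eventually_mem {a : M} {K : Set M} (hK : IsCompact K)
    (h : ∀ᶠ n in atTop, a ^ n ∈ K) : (powClusterPts a).Nonempty :=
  let ⟨x, _, hx⟩ := hK.exists_mapClusterPt_of_frequently h.frequently
  ⟨x, hx⟩

variable [SeparatelyContinuousMul M]

theorem mul_pow_mem_powClusterPts {a x : M} (hx : x ∈ powClusterPts a) (m : ℕ) :
    x * a ^ m ∈ powClusterPts a := by
  have hshift : MapClusterPt (x * a ^ m) atTop ((a ^ ·) ∘ (· + m)) := by
    simpa only [Function.comp_def, pow_add] using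
      hx.continuousAt_comp (continuous_mul_const (a ^ m)).continuousAt
  exact hshift.of_comp (tendsto_add_atTop_nat m)

/-- `x * y` is a cluster point of the sequence `x * a ^ m`, all of whose terms are cluster points
of the powers. -/
theorem mul_mem_powClusterPts {a x y : M} (hx : x ∈ powClusterPts a)
    (hy : y ∈ powClusterPts a) : x * y ∈ powClusterPts a :=
  (isClosed_powClusterPts a).mem_of_mapClusterPt
    (hy.continuousAt_comp (continuous_const_mul x).continuousAt)
    (Eventually.of_forall (mul_pow_mem_powClusterPts hx))

theorem exists_idempotent_mem_powClusterPts [T2Space M] {a : M} {K : Set M} (hK : IsCompact K)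
    (h : ∀ᶠ n in atTop, a ^ n ∈ K) : ∃ x ∈ powClusterPts a, x * x = x :=
  exists_idempotent_in_compact_subsemigroup continuous_mul_const (powClusterPts a)
    (powClusterPts_nonempty_of_eventually_mem hK h)
    (hK.of_isClosed_subset (isClosed_powClusterPts a)
      (powClusterPts_subset_of_eventually_mem hK.isClosed h))
    fun _ hx _ hy => mul_mem_powClusterPts hx hy

end PowClusterPts

theorem norm_pow_le_one_of_norm_le_one {R : Type*} [SeminormedRing R] {a : R} (ha : ‖a‖ ≤ 1)
    {n : ℕ} (hn : 0 < n) : ‖a ^ n‖ ≤ 1 :=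
  (norm_pow_le' a hn).trans (pow_le_one₀ (norm_nonneg a) ha)

open Filter in
/-- a contractive map on a finite-dimensional normed space has an
idempotent among the limit points of its sequence of iterates. -/
theorem exists_idempotent_limit_point {E : Type*} [NormedAddCommGroup E]
    [NormedSpace ℂ E] [FiniteDimensional ℂ E] (φ : E →L[ℂ] E) (hφ : ‖φ‖ ≤ 1) :
    ∃ ψ : E →L[ℂ] E, ψ * ψ = ψ ∧ MapClusterPt ψ atTop (fun k : ℕ => φ ^ k) := by
  have hpow : ∀ᶠ k in atTop, φ ^ k ∈ Metric.closedBall (0 : E →L[ℂ] E) 1 :=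
    eventually_gt_atTop 0 |>.mono fun _ hk =>
      mem_closedBall_zero_iff.mpr (norm_pow_le_one_of_norm_le_one hφ hk)
  obtain ⟨ψ, hψ, hidem⟩ := exists_idempotent_mem_powClusterPts (isCompact_closedBall 0 1) hpow
  exact ⟨ψ, hidem, hψ⟩
end

section
/- Let φ be a contractive linear map on a finite-dimensional normed space and let ψ be an idempotent that is a limit point of the iterates (φ^k). Then ‖φ^k − φ^k ∘ ψ‖ → 0 as k → ∞. -/
/-! Since `‖φ‖ ≤ 1`, the norms of `φ ^ k - φ ^ k * ψ = φ ^ k * (1 - ψ)` do not increase, and along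
iterates close to `ψ` they come close to `‖ψ * (1 - ψ)‖ = 0`; a non-increasing sequence with
cluster point `0` tends to `0`. -/

open Matrix Kronecker BigOperators
open scoped ComplexOrder

open Filter Topology

theorem Antitone.tendsto_atTop_of_mapClusterPt {α : Type*} [LinearOrder α] [TopologicalSpace α]
    [OrderTopology α] {u : ℕ → α} (hu : Antitone u) {x : α} (hx : MapClusterPt x atTop u) :
    Tendsto u atTop (𝓝 x) := by
  have hx_le : ∀ n, x ≤ u n := by
    intro n
    by_contra! hlt
    obtain ⟨m, hnm, hm⟩ :=
      (mapClusterPt_iff_frequently.1 hx _ (Ioi_mem_nhds hlt)).forall_exists_of_atTop n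
    exact (hu hnm).not_gt hm
  refine tendsto_order.2 ⟨fun a ha => .of_forall fun n => ha.trans_le (hx_le n), fun a ha => ?_⟩
  obtain ⟨k, hk⟩ := (mapClusterPt_iff_frequently.1 hx _ (Iio_mem_nhds ha)).exists
  exact eventually_atTop.2 ⟨k, fun n hkn => (hu hkn).trans_lt hk⟩

theorem antitone_norm_pow_mul {R : Type*} [SeminormedRing R] {a : R} (ha : ‖a‖ ≤ 1) (b : R) :
    Antitone fun n : ℕ => ‖a ^ n * b‖ :=
  antitone_nat_of_succ_le fun n =>
    calc ‖a ^ (n + 1) * b‖ = ‖a * (a ^ n * b)‖ := by rw [pow_succ', mul_assoc]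
      _ ≤ ‖a‖ * ‖a ^ n * b‖ := norm_mul_le _ _
      _ ≤ ‖a ^ n * b‖ := mul_le_of_le_one_left (norm_nonneg _) ha

open Filter in
theorem tendsto_pow_sub_pow_comp_idempotent_general {E : Type*} [NormedAddCommGroup E]
    [NormedSpace ℂ E] (φ ψ : E →L[ℂ] E) (hφ : ‖φ‖ ≤ 1)
    (hidem : ψ * ψ = ψ) (hlim : MapClusterPt ψ atTop (fun k : ℕ => φ ^ k)) :
    Tendsto (fun k : ℕ => ‖φ ^ k - φ ^ k * ψ‖) atTop (nhds 0) := by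
  have hψ : ψ * (1 - ψ) = 0 := by rw [mul_sub, mul_one, hidem, sub_self]
  have hcluster : MapClusterPt 0 atTop fun k : ℕ => ‖φ ^ k * (1 - ψ)‖ := by
    have hcont : Continuous fun T : E →L[ℂ] E => ‖T * (1 - ψ)‖ := by fun_prop
    simpa only [hψ, norm_zero, Function.comp_def] using hlim.tendsto_comp (hcont.tendsto ψ)
  simpa only [mul_sub, mul_one] using
    (antitone_norm_pow_mul hφ (1 - ψ)).tendsto_atTop_of_mapClusterPt hcluster

open Filter in
/-- if `φ` is contractive and `ψ` is an idempotent limit point of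
the iterates of `φ`, then `‖φ^k − φ^k ∘ ψ‖ → 0`. -/
theorem tendsto_pow_sub_pow_comp_idempotent {E : Type*} [NormedAddCommGroup E]
    [NormedSpace ℂ E] [FiniteDimensional ℂ E] (φ ψ : E →L[ℂ] E) (hφ : ‖φ‖ ≤ 1)
    (hidem : ψ * ψ = ψ) (hlim : MapClusterPt ψ atTop (fun k : ℕ => φ ^ k)) :
    Tendsto (fun k : ℕ => ‖φ ^ k - φ ^ k * ψ‖) atTop (nhds 0) :=
  tendsto_pow_sub_pow_comp_idempotent_general φ ψ hφ hidem hlim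
end

section
/- Let A be the adjacency matrix of a (nonzero) graph on p vertices, δ(X) = (Tr(X)/p)·I, and γ_t = tδ + S_A where S_A is Schur multiplication by A. Then γ_t is completely positive if and only if t ≥ −p·λ_min(A), where λ_min(A) is the least eigenvalue of A. -/
/-!
Let `V : ℂ^p → ℂ^p ⊗ ℂ^p` be the isometry `e_k ↦ e_k ⊗ e_k`. The Choi matrix of `γ_t` is
`c • 1 + V A Vᴴ` with `c = t / p`. Compressing by `V` turns it into `c • 1 + A`, so complete
positivity forces `c ≥ -λ_min(A)`. Conversely
`c • 1 + V A Vᴴ = V (c • 1 + A) Vᴴ + c • (1 - V Vᴴ)`, where `1 - V Vᴴ` is an orthogonal projection;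
and when `c ≥ -λ_min(A)` both terms are positive semidefinite: the first by the spectral theorem,
the second because `c ≥ 0`, as `A` has zero trace and hence `λ_min(A) ≤ 0`.
-/

open Matrix Kronecker BigOperators
open scoped ComplexOrder

/-- `A` is the adjacency matrix of a graph: a symmetric 0-1 matrix with zero diagonal. -/
def IsAdjacencyMatrix {p : ℕ} (A : Matrix (Fin p) (Fin p) ℂ) : Prop :=
  Aᵀ = A ∧ (∀ i j, A i j = 0 ∨ A i j = 1) ∧ ∀ i, A i i = 0

namespace Matrix

def copyIsometry (n R : Type*) [DecidableEq n] [Zero R] [One R] : Matrix (n × n) n R :=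
  of fun a k => if a = (k, k) then 1 else 0

variable {m n 𝕜 : Type*} [Fintype m] [Fintype n] [DecidableEq m] [DecidableEq n] [RCLike 𝕜]

theorem copyIsometry_conjTranspose_mul_self (R : Type*) [Semiring R] [StarRing R] :
    (copyIsometry n R)ᴴ * copyIsometry n R = 1 := by
  ext i j
  rcases eq_or_ne i j with rfl | h
  · simp [copyIsometry, mul_apply]
  · simp [copyIsometry, mul_apply, h, Ne.symm h]

theorem IsHermitian.posSemidef_smul_one_add_iff {A : Matrix n n 𝕜} (hA : A.IsHermitian) (c : ℝ) :
    ((c : 𝕜) • 1 + A).PosSemidef ↔ ∀ i, -c ≤ hA.eigenvalues i := by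
  have hdiag : (c : 𝕜) • 1 + A = Unitary.conjStarAlgAut 𝕜 _ hA.eigenvectorUnitary
      (diagonal fun i => ((c + hA.eigenvalues i : ℝ) : 𝕜)) := by
    have : diagonal (fun i => ((c + hA.eigenvalues i : ℝ) : 𝕜))
        = (c : 𝕜) • 1 + diagonal (RCLike.ofReal ∘ hA.eigenvalues) := by
      rw [smul_one_eq_diagonal, diagonal_add]
      congr 1
      ext i
      simp
    rw [this, map_add, map_smul, map_one, ← hA.spectral_theorem]
  rw [hdiag, Unitary.conjStarAlgAut_apply,
    Unitary.isUnit_coe.posSemidef_star_right_conjugate_iff, posSemidef_diagonal_iff]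
  simp only [RCLike.ofReal_nonneg, neg_le_iff_add_nonneg']

theorem IsHermitian.iInf_eigenvalues_nonpos [Nonempty n] {A : Matrix n n 𝕜} (hA : A.IsHermitian)
    (htr : A.trace = 0) : ⨅ i, hA.eigenvalues i ≤ 0 := by
  have hsum : ∑ i, hA.eigenvalues i ≤ ∑ _i : n, 0 := by
    have := hA.trace_eq_sum_eigenvalues
    rw [htr, ← RCLike.ofReal_sum, eq_comm, RCLike.ofReal_eq_zero] at this
    simp [this]
  obtain ⟨i, -, hi⟩ := Finset.exists_le_of_sum_le Finset.univ_nonempty hsum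
  exact (ciInf_le (Finite.bddBelow_range _) i).trans hi

theorem PosSemidef.of_smul_one_add_mul_mul_conjTranspose {V : Matrix m n 𝕜} (hV : Vᴴ * V = 1)
    {A : Matrix n n 𝕜} {c : 𝕜} (h : (c • 1 + V * A * Vᴴ).PosSemidef) : (c • 1 + A).PosSemidef := by
  have hcompress : Vᴴ * (c • 1 + V * A * Vᴴ) * V = c • 1 + A := by
    simp only [Matrix.mul_add, Matrix.add_mul, Matrix.mul_smul, Matrix.smul_mul, Matrix.mul_one,
      hV, ← Matrix.mul_assoc, Matrix.one_mul]
    rw [Matrix.mul_assoc, hV, Matrix.mul_one]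
  simpa only [hcompress] using h.conjTranspose_mul_mul_same V

theorem PosSemidef.smul_one_add_mul_mul_conjTranspose {V : Matrix m n 𝕜} (hV : Vᴴ * V = 1)
    {A : Matrix n n 𝕜} {c : 𝕜} (hc : 0 ≤ c) (h : (c • 1 + A).PosSemidef) :
    (c • 1 + V * A * Vᴴ).PosSemidef := by
  have hproj : (1 - V * Vᴴ)ᴴ * (1 - V * Vᴴ) = 1 - V * Vᴴ := by
    simp only [conjTranspose_sub, conjTranspose_one, conjTranspose_mul, conjTranspose_conjTranspose,
      Matrix.sub_mul, Matrix.mul_sub, Matrix.one_mul, Matrix.mul_one]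
    rw [Matrix.mul_assoc, ← Matrix.mul_assoc Vᴴ, hV, Matrix.one_mul, sub_self, sub_zero]
  have hsplit : c • 1 + V * A * Vᴴ = V * (c • 1 + A) * Vᴴ + c • (1 - V * Vᴴ) := by
    simp only [Matrix.mul_add, Matrix.add_mul, Matrix.mul_smul, Matrix.smul_mul, Matrix.mul_one,
      smul_sub]
    abel
  rw [hsplit]
  exact (h.mul_mul_conjTranspose_same V).add
    ((hproj ▸ posSemidef_conjTranspose_mul_self _).smul hc)

end Matrix

theorem choi_add {p q : ℕ} (φ ψ : Matrix (Fin p) (Fin p) ℂ →ₗ[ℂ] Matrix (Fin q) (Fin q) ℂ) :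
    choi (φ + ψ) = choi φ + choi ψ :=
  rfl

theorem choi_smul {p q : ℕ} (c : ℂ) (φ : Matrix (Fin p) (Fin p) ℂ →ₗ[ℂ] Matrix (Fin q) (Fin q) ℂ) :
    choi (c • φ) = c • choi φ :=
  rfl

theorem choi_deltaMap (p : ℕ) : choi (deltaMap p) = (p : ℂ)⁻¹ • 1 := by
  ext ⟨i, k⟩ ⟨j, l⟩
  rcases eq_or_ne i j with rfl | hij
  · simp [choi, deltaMap, trace_single_eq_same, one_apply, div_eq_inv_mul]
  · simp [choi, deltaMap, trace_single_eq_of_ne _ _ _ hij, one_apply, hij]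

theorem choi_schurMap {p : ℕ} (A : Matrix (Fin p) (Fin p) ℂ) :
    choi (schurMap A) = copyIsometry (Fin p) ℂ * A * (copyIsometry (Fin p) ℂ)ᴴ := by
  ext ⟨i, k⟩ ⟨j, l⟩
  simp only [choi, schurMap, copyIsometry, LinearMap.coe_mk, AddHom.coe_mk, hadamard_apply,
    single_apply, mul_apply, conjTranspose_apply, of_apply, Prod.mk.injEq]
  by_cases hik : i = k
  · by_cases hjl : j = l
    · subst hik hjl
      simp
    · have : ∀ x, ¬ (j = x ∧ l = x) := by rintro x ⟨rfl, rfl⟩; exact hjl rfl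
      simp [this, hjl]
  · have : ∀ x, ¬ (i = x ∧ k = x) := by rintro x ⟨rfl, rfl⟩; exact hik rfl
    simp [this, hik]

theorem choi_gammaMap {p : ℕ} (t : ℝ) (A : Matrix (Fin p) (Fin p) ℂ) :
    choi (gammaMap t A) =
      ((t / p : ℝ) : ℂ) • 1 + copyIsometry (Fin p) ℂ * A * (copyIsometry (Fin p) ℂ)ᴴ := by
  rw [gammaMap, choi_add, choi_smul, choi_deltaMap, choi_schurMap, smul_smul]
  push_cast
  rfl

theorem IsAdjacencyMatrix.trace_eq_zero {p : ℕ} {A : Matrix (Fin p) (Fin p) ℂ}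
    (hA : IsAdjacencyMatrix A) : A.trace = 0 := by
  simp [trace, hA.2.2]

/-- for a nonzero adjacency matrix `A`, the map `γ_t = tδ + S_A`
is completely positive iff `t ≥ −p·λ_min(A)`. -/
theorem gamma_cp_iff {p : ℕ} (A : Matrix (Fin p) (Fin p) ℂ)
    (hadj : IsAdjacencyMatrix A) (hA : A ≠ 0) (hherm : A.IsHermitian) (t : ℝ) :
    IsCP (gammaMap t A) ↔ -(p : ℝ) * (⨅ i, hherm.eigenvalues i) ≤ t := by
  have hp : 0 < p := Nat.pos_of_ne_zero fun h => hA (by subst h; exact Subsingleton.elim _ _)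
  have : Nonempty (Fin p) := ⟨⟨0, hp⟩⟩
  have hmin := hherm.iInf_eigenvalues_nonpos hadj.trace_eq_zero
  have hbound :
      -(p : ℝ) * (⨅ i, hherm.eigenvalues i) ≤ t ↔ ∀ i, -(t / p) ≤ hherm.eigenvalues i := by
    rw [← le_ciInf_iff (Finite.bddBelow_range _), neg_le, le_div_iff₀ (by exact_mod_cast hp)]
    constructor <;> intro h <;> linarith
  have hV := copyIsometry_conjTranspose_mul_self (n := Fin p) ℂ
  rw [IsCP, choi_gammaMap, hbound, ← hherm.posSemidef_smul_one_add_iff]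
  refine ⟨fun h => h.of_smul_one_add_mul_mul_conjTranspose hV, fun h => ?_⟩
  have hc : 0 ≤ t / p := by linarith [le_ciInf ((hherm.posSemidef_smul_one_add_iff _).1 h)]
  exact h.smul_one_add_mul_mul_conjTranspose hV (Complex.zero_le_real.2 hc)
end
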